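/- Two barcodes with finitely many semi-infinite bars lie in the same path component of the space of barcodes (with the bottleneck metric) if and only if they have the same number of semi-infinite bars. In particular, the connected components of 𝓑̂ are indexed by the number of semi-infinite bars, and each connected component is path-connected. -/

import Mathlib

/-!
A `δ`-matching can neither delete a semi-infinite bar (its length is `∞ > 2δ`) nor pair it
with a finite one (the thickened finite bar is bounded), so it preserves `σ^∞`. Hence `σ^∞` is
locally constant along a path in `𝓑̂`, and constant since `[0, 1]` is connected.

Conversely, if `σ^∞(B) = σ^∞(B')`, pair the semi-infinite bars by a bijection `π` and
interpolate linearly in `u ∈ [0, 1]`: the finite bars of `B` shrink to length `0` at their left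
end points, those of `B'` grow from length `0`, and each `(a, +∞)` slides to its partner
`(a', +∞)`. Finitely many bars are semi-infinite and the finite bars have bounded length, so every
end point moves at speed at most some `L`, and the interpolation is `L`-Lipschitz for the
bottleneck distance.
-/

open scoped ENNReal

/-- A bar `(a, b]`, where the second component `⊤ : EReal` encodes a
semi-infinite bar `(a, +∞)`. -/
abbrev Bar := ℝ × EReal

namespace Bar

/-- A bar is valid when it describes a non-empty interval. -/
def IsValid (I : Bar) : Prop := (I.1 : EReal) < I.2

/-- The length of a bar. -/
noncomputable def length (I : Bar) : EReal := I.2 - (I.1 : EReal)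

/-- The interval `(a, b]` (or `(a, +∞)`) underlying a bar, as a subset of `ℝ`. -/
def toSet (I : Bar) : Set ℝ := {x | I.1 < x ∧ (x : EReal) ≤ I.2}

/-- The `δ`-thickening `I^{-δ}` of a bar: `(a, b]` becomes `(a - δ, b + δ]`
and `(a, +∞)` becomes `(a - δ, +∞)`. -/
noncomputable def thicken (δ : ℝ) (I : Bar) : Bar := (I.1 - δ, I.2 + (δ : EReal))

/-- The shift of a bar by `c ∈ ℝ`. -/
noncomputable def shift (c : ℝ) (I : Bar) : Bar := (I.1 + c, I.2 + (c : EReal))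

/-- A bar is semi-infinite when its right end point is `+∞`. -/
def IsInfinite (I : Bar) : Prop := I.2 = ⊤

lemma length_shift (c : ℝ) (I : Bar) : (I.shift c).length = I.length := by
  obtain ⟨a, b⟩ := I
  induction b using EReal.rec with
  | bot => simp [shift, length]
  | top => show (⊤ : EReal) - ((a + c : ℝ) : EReal) = ⊤ - (a : EReal); rw [EReal.top_sub_coe, EReal.top_sub_coe]
  | coe b =>
      show ((b : EReal) + (c : EReal)) - ((a + c : ℝ) : EReal) = (b : EReal) - (a : EReal)
      norm_cast
      ring

lemma IsValid.shift {I : Bar} (h : I.IsValid) (c : ℝ) : (I.shift c).IsValid := by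
  obtain ⟨a, b⟩ := I
  show ((a + c : ℝ) : EReal) < b + (c : EReal)
  push_cast
  exact EReal.add_lt_add_right_coe h c

end Bar

/-- A barcode: a multiset of valid bars (encoded by an indexed family), such
that for every `ε > 0` only finitely many bars have length at least `ε`. -/
structure Barcode where
  ι : Type
  bar : ι → Bar
  valid : ∀ i, (bar i).IsValid
  finLong : ∀ ε : ℝ, 0 < ε → {i | (ε : EReal) ≤ (bar i).length}.Finite

namespace Barcode

/-- Equality of barcodes as multisets of bars: there is a bijection between the
index sets commuting with the bars. -/
def Equiv (B B' : Barcode) : Prop :=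
  ∃ e : B.ι ≃ B'.ι, ∀ i, B'.bar (e i) = B.bar i

/-- A `δ`-matching between two barcodes: one deletes, in both barcodes, some
bars of length at most `2δ`, and finds a bijection `φ` between the remaining
bars such that `φ(I) = J` implies `I ⊆ J^{-δ}` and `J ⊆ I^{-δ}`. -/
structure Matching (δ : ℝ) (B B' : Barcode) where
  del : Set B.ι
  del' : Set B'.ι
  del_short : ∀ i ∈ del, (B.bar i).length ≤ ((2 * δ : ℝ) : EReal)
  del'_short : ∀ j ∈ del', (B'.bar j).length ≤ ((2 * δ : ℝ) : EReal)
  φ : ↥(delᶜ) ≃ ↥(del'ᶜ)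
  subset : ∀ i : ↥(delᶜ), (B.bar i).toSet ⊆ (Bar.thicken δ (B'.bar (φ i))).toSet
  subset' : ∀ i : ↥(delᶜ), (B'.bar (φ i)).toSet ⊆ (Bar.thicken δ (B.bar i)).toSet

/-- The bottleneck distance between two barcodes (`⊤` if no matching exists). -/
noncomputable def dBottle (B B' : Barcode) : ℝ≥0∞ :=
  sInf (ENNReal.ofReal '' {δ : ℝ | 0 ≤ δ ∧ Nonempty (Matching δ B B')})

/-- The shift of a barcode by `c ∈ ℝ`, denoted `B[c]`. -/
noncomputable def shift (c : ℝ) (B : Barcode) : Barcode where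
  ι := B.ι
  bar i := (B.bar i).shift c
  valid i := (B.valid i).shift c
  finLong ε hε := by simpa [Bar.length_shift] using B.finLong ε hε

/-- `σ^∞(B)`: the number of semi-infinite bars of `B`. -/
noncomputable def sigmaInf (B : Barcode) : ℕ :=
  Nat.card {i : B.ι // (B.bar i).IsInfinite}

/-- The quotient pseudo-distance on the space `𝓑̂` of barcodes modulo overall
shift: `δ([B], [B']) = inf_c d_bottle(B, B'[c])`. -/
noncomputable def dHat (B B' : Barcode) : ℝ≥0∞ :=
  ⨅ c : ℝ, dBottle B (B'.shift c)

end Barcode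

lemma mul_le_mul_add_mul_abs_sub {c d ℓ L : ℝ} (h₀ : 0 ≤ ℓ) (h₁ : ℓ ≤ L) :
    c * ℓ ≤ d * ℓ + L * |c - d| := by
  nlinarith [le_abs_self (c - d), abs_nonneg (c - d)]

open Filter Topology

lemma eq_of_forall_exists_pos_eq_on_Icc {α : Type*} {f : ℝ → α}
    (h : ∀ t ∈ Set.Icc (0 : ℝ) 1, ∃ η > 0,
      ∀ s ∈ Set.Icc (0 : ℝ) 1, |s - t| < η → f s = f t) :
    f 0 = f 1 := by
  let _ : TopologicalSpace α := ⊥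
  have : DiscreteTopology α := ⟨rfl⟩
  refine isPreconnected_Icc.constant (fun t ht => ?_) (Set.left_mem_Icc.2 zero_le_one)
    (Set.right_mem_Icc.2 zero_le_one)
  obtain ⟨η, hη, hf⟩ := h t ht
  rw [ContinuousWithinAt, nhds_discrete, tendsto_pure, eventually_nhdsWithin_iff,
    Metric.eventually_nhds_iff]
  exact ⟨η, hη, fun s hst hs => hf s hs (by rwa [Real.dist_eq] at hst)⟩

lemma exists_pos_forall_lt_of_le_ofReal_mul_abs {f : ℝ → ℝ≥0∞} {L t : ℝ}
    (hf : ∀ s, f s ≤ ENNReal.ofReal (L * |s - t|)) {ε : ℝ≥0∞} (hε : 0 < ε) :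
    ∃ η > 0, ∀ s, |s - t| < η → f s < ε := by
  have hg : Tendsto (fun s => ENNReal.ofReal (L * |s - t|)) (𝓝 t) (𝓝 0) := by
    have : Continuous fun s => ENNReal.ofReal (L * |s - t|) :=
      ENNReal.continuous_ofReal.comp (by fun_prop)
    simpa using this.tendsto t
  have hf₀ := tendsto_of_tendsto_of_tendsto_of_le_of_le tendsto_const_nhds hg (fun _ => bot_le) hf
  simpa [Real.dist_eq] using Metric.eventually_nhds_iff.1 (hf₀.eventually (gt_mem_nhds hε))

namespace Bar

lemma toSet_subset_thicken {δ : ℝ} {I J : Bar} (h₁ : J.1 - δ ≤ I.1)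
    (h₂ : I.2 ≤ J.2 + (δ : EReal)) : I.toSet ⊆ (J.thicken δ).toSet :=
  fun _ hx => ⟨h₁.trans_lt hx.1, hx.2.trans h₂⟩

lemma IsInfinite.of_toSet_subset_thicken {δ : ℝ} {I J : Bar} (hI : I.IsInfinite)
    (h : I.toSet ⊆ (J.thicken δ).toSet) : J.IsInfinite := by
  refine not_not.1 fun hJ => EReal.add_ne_top hJ (EReal.coe_ne_top δ) ?_
  refine (EReal.eq_top_iff_forall_lt _).2 fun y => ?_
  have hx : max I.1 y + 1 ∈ I.toSet :=
    ⟨by linarith [le_max_left I.1 y], by rw [hI]; exact le_top⟩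
  exact (EReal.coe_lt_coe_iff.2 (by linarith [le_max_right I.1 y])).trans_le (h hx).2

lemma isInfinite_shift_iff (c : ℝ) (I : Bar) : (I.shift c).IsInfinite ↔ I.IsInfinite :=
  ⟨fun h => not_not.1 fun hI => EReal.add_ne_top hI (EReal.coe_ne_top c) h,
    fun h => (congrArg (· + (c : EReal)) h).trans (EReal.top_add_coe c)⟩

lemma shift_zero (I : Bar) : I.shift 0 = I := by
  simp [shift]

lemma IsInfinite.length_eq_top {I : Bar} (h : I.IsInfinite) : I.length = ⊤ := by
  rw [length, h, EReal.top_sub_coe]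

def ofLength (a ℓ : ℝ) : Bar := (a, ((a + ℓ : ℝ) : EReal))

lemma length_ofLength (a ℓ : ℝ) : (ofLength a ℓ).length = ℓ := by
  rw [length, ofLength, ← EReal.coe_sub, add_sub_cancel_left]

lemma isValid_ofLength (a : ℝ) {ℓ : ℝ} (hℓ : 0 < ℓ) : (ofLength a ℓ).IsValid :=
  EReal.coe_lt_coe_iff.2 (lt_add_of_pos_right a hℓ)

lemma toSet_ofLength_subset_thicken {a ℓ ℓ' δ : ℝ} (hδ : 0 ≤ δ) (h : ℓ ≤ ℓ' + δ) :
    (ofLength a ℓ).toSet ⊆ ((ofLength a ℓ').thicken δ).toSet :=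
  toSet_subset_thicken (by simp [ofLength, hδ]) (by
    simp only [ofLength, ← EReal.coe_add, EReal.coe_le_coe_iff]; linarith)

lemma toSet_subset_thicken_of_isInfinite {a a' : ℝ} {δ : ℝ} (h : a' - a ≤ δ) :
    toSet (a, ⊤) ⊆ (thicken δ (a', ⊤)).toSet :=
  toSet_subset_thicken (by dsimp only; linarith) (by simp)

lemma eq_ofLength {I : Bar} (hI : I.IsValid) (h : ¬I.IsInfinite) :
    I = ofLength I.1 I.length.toReal := by
  obtain ⟨a, b⟩ := I
  induction b using EReal.rec with
  | bot => exact absurd hI not_lt_bot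
  | top => exact absurd rfl h
  | coe b => simp [ofLength, length, ← EReal.coe_sub]

lemma length_eq_coe_toReal {I : Bar} (hI : I.IsValid) (h : ¬I.IsInfinite) :
    I.length = I.length.toReal := by
  rw [eq_ofLength hI h, length_ofLength, EReal.toReal_coe]

lemma length_toReal_pos {I : Bar} (hI : I.IsValid) (h : ¬I.IsInfinite) :
    0 < I.length.toReal := by
  have := hI
  rw [eq_ofLength hI h, IsValid, ofLength, EReal.coe_lt_coe_iff] at this
  linarith

lemma length_toReal_nonneg {I : Bar} (hI : I.IsValid) : 0 ≤ I.length.toReal := by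
  by_cases h : I.IsInfinite
  · simp [h.length_eq_top]
  · exact (length_toReal_pos hI h).le

end Bar

namespace Barcode

variable {δ : ℝ}

lemma finite_setOf_isInfinite (B : Barcode) : {i | (B.bar i).IsInfinite}.Finite :=
  (B.finLong 1 one_pos).subset fun i hi => by simp [Bar.IsInfinite.length_eq_top hi]

lemma exists_length_toReal_le (B : Barcode) :
    ∃ L : ℝ, ∀ i, (B.bar i).length.toReal ≤ L := by
  obtain ⟨M, hM⟩ := ((B.finLong 1 one_pos).image fun i => (B.bar i).length.toReal).bddAbove
  refine ⟨max 1 M, fun i => ?_⟩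
  by_cases h1 : ((1 : ℝ) : EReal) ≤ (B.bar i).length
  · exact (hM ⟨i, h1, rfl⟩).trans (le_max_right _ _)
  by_cases hi : (B.bar i).IsInfinite
  · simp [hi.length_eq_top]
  rw [Bar.length_eq_coe_toReal (B.valid i) hi, EReal.coe_le_coe_iff] at h1
  exact (not_le.1 h1).le.trans (le_max_left _ _)

namespace Matching

def symm {B C : Barcode} (m : Matching δ B C) : Matching δ C B where
  del := m.del'
  del' := m.del
  del_short := m.del'_short
  del'_short := m.del_short
  φ := m.φ.symm
  subset j := by simpa using m.subset' (m.φ.symm j)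
  subset' j := by simpa using m.subset (m.φ.symm j)

lemma notMem_del_of_isInfinite {B C : Barcode} (m : Matching δ B C) {i : B.ι}
    (h : (B.bar i).IsInfinite) : i ∉ m.del := fun hi =>
  (EReal.coe_lt_top _).not_ge (h.length_eq_top ▸ m.del_short i hi)

end Matching

lemma Equiv.matching_left {B₁ B₂ C : Barcode} (h : B₁.Equiv B₂) :
    Nonempty (Matching δ B₂ C) → Nonempty (Matching δ B₁ C) := by
  rintro ⟨m⟩
  obtain ⟨e, he⟩ := h
  exact ⟨{
    del := e ⁻¹' m.del
    del' := m.del'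
    del_short := fun i hi => he i ▸ m.del_short (e i) hi
    del'_short := m.del'_short
    φ := (e.subtypeEquiv fun _ => Iff.rfl).trans m.φ
    subset := fun i => he i ▸ m.subset (e.subtypeEquiv (fun _ => Iff.rfl) i)
    subset' := fun i => he i ▸ m.subset' (e.subtypeEquiv (fun _ => Iff.rfl) i) }⟩

lemma Equiv.matching_right {B C₁ C₂ : Barcode} (h : C₁.Equiv C₂)
    (hm : Nonempty (Matching δ B C₂)) : Nonempty (Matching δ B C₁) :=
  let ⟨m⟩ := hm
  let ⟨m'⟩ := h.matching_left ⟨m.symm⟩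
  ⟨m'.symm⟩

lemma shift_zero_equiv (C : Barcode) : (C.shift 0).Equiv C :=
  ⟨_root_.Equiv.refl _, fun i => (Bar.shift_zero (C.bar i)).symm⟩

lemma dHat_le_of_matching {B C : Barcode} (hδ : 0 ≤ δ) (h : Nonempty (Matching δ B C)) :
    dHat B C ≤ ENNReal.ofReal δ :=
  calc dHat B C ≤ dBottle B (C.shift 0) := iInf_le _ 0
    _ ≤ ENNReal.ofReal δ :=
      sInf_le (Set.mem_image_of_mem _ ⟨hδ, C.shift_zero_equiv.matching_right h⟩)

lemma sigmaInf_eq_of_matching {B C : Barcode} (m : Matching δ B C) :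
    B.sigmaInf = C.sigmaInf :=
  Nat.card_congr <|
    (_root_.Equiv.subtypeSubtypeEquivSubtype m.notMem_del_of_isInfinite).symm.trans <|
    (m.φ.subtypeEquiv fun x => ⟨fun h => h.of_toSet_subset_thicken (m.subset x),
      fun h => h.of_toSet_subset_thicken (m.subset' x)⟩).trans <|
    _root_.Equiv.subtypeSubtypeEquivSubtype m.symm.notMem_del_of_isInfinite

lemma sigmaInf_shift (c : ℝ) (B : Barcode) : (B.shift c).sigmaInf = B.sigmaInf :=
  Nat.card_congr (_root_.Equiv.subtypeEquivRight fun i => Bar.isInfinite_shift_iff c (B.bar i))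

lemma sigmaInf_eq_of_dHat_lt_top {B C : Barcode} (h : dHat B C < ⊤) :
    B.sigmaInf = C.sigmaInf := by
  obtain ⟨c, hc⟩ := iInf_lt_iff.1 h
  obtain ⟨_, ⟨δ, ⟨-, ⟨m⟩⟩, -⟩, -⟩ := sInf_lt_iff.1 hc
  rw [← sigmaInf_shift c C]
  exact sigmaInf_eq_of_matching m

section Interpolation

variable {B B' : Barcode}
  (π : {i : B.ι // (B.bar i).IsInfinite} ≃ {j : B'.ι // (B'.bar j).IsInfinite})

variable (B B') in
/-- The bars alive at time `u`: bars of length `0` are dropped, and the semi-infinite bars of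
`B'` are represented by their partners in `B`. -/
def InterpKeep (u : unitInterval) : B.ι ⊕ B'.ι → Prop
  | .inl i => (B.bar i).IsInfinite ∨ (u : ℝ) < 1
  | .inr j => ¬(B'.bar j).IsInfinite ∧ 0 < (u : ℝ)

open scoped Classical in
noncomputable def interpBar (u : unitInterval) : B.ι ⊕ B'.ι → Bar
  | .inl i =>
    if h : (B.bar i).IsInfinite then
      ((1 - u) * (B.bar i).1 + u * (B'.bar (π ⟨i, h⟩)).1, ⊤)
    else Bar.ofLength (B.bar i).1 ((1 - u) * (B.bar i).length.toReal)
  | .inr j => Bar.ofLength (B'.bar j).1 (u * (B'.bar j).length.toReal)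

lemma length_interpBar_le (u : unitInterval) (x : B.ι ⊕ B'.ι) :
    (interpBar π u x).length ≤ (Sum.elim B.bar B'.bar x).length := by
  obtain ⟨u, hu₀, hu₁⟩ := u
  rcases x with i | j
  · by_cases h : (B.bar i).IsInfinite
    · simp [h.length_eq_top]
    simp only [interpBar, dif_neg h, Bar.length_ofLength, Sum.elim_inl]
    rw [Bar.length_eq_coe_toReal (B.valid i) h, EReal.coe_le_coe_iff]
    exact mul_le_of_le_one_left (Bar.length_toReal_nonneg (B.valid i)) (by linarith)
  · by_cases h : (B'.bar j).IsInfinite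
    · simp [h.length_eq_top]
    simp only [interpBar, Bar.length_ofLength, Sum.elim_inr]
    rw [Bar.length_eq_coe_toReal (B'.valid j) h, EReal.coe_le_coe_iff]
    exact mul_le_of_le_one_left (Bar.length_toReal_nonneg (B'.valid j)) hu₁

lemma isValid_interpBar {u : unitInterval} {x : B.ι ⊕ B'.ι} (hx : InterpKeep B B' u x) :
    (interpBar π u x).IsValid := by
  rcases x with i | j
  · by_cases h : (B.bar i).IsInfinite
    · simp only [interpBar, dif_pos h]
      exact EReal.coe_lt_top _
    simp only [interpBar, dif_neg h]
    exact Bar.isValid_ofLength _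
      (mul_pos (sub_pos.2 (hx.resolve_left h)) (Bar.length_toReal_pos (B.valid i) h))
  · exact Bar.isValid_ofLength _ (mul_pos hx.2 (Bar.length_toReal_pos (B'.valid j) hx.1))

noncomputable def interp (u : unitInterval) : Barcode where
  ι := {x // InterpKeep B B' u x}
  bar x := interpBar π u x
  valid x := isValid_interpBar π x.2
  finLong ε hε := by
    have hfin : {x : B.ι ⊕ B'.ι | (ε : EReal) ≤ (Sum.elim B.bar B'.bar x).length}.Finite :=
      Set.finite_preimage_inl_and_inr.1 ⟨B.finLong ε hε, B'.finLong ε hε⟩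
    exact (hfin.preimage Subtype.val_injective.injOn).subset fun x hx =>
      le_trans hx (length_interpBar_le π u x)

structure InterpBound (L : ℝ) : Prop where
  nonneg : 0 ≤ L
  length_le : ∀ i, (B.bar i).length.toReal ≤ L
  length_le' : ∀ j, (B'.bar j).length.toReal ≤ L
  dist_le : ∀ i, |(B.bar i.1).1 - (B'.bar (π i)).1| ≤ L

lemma exists_interpBound : ∃ L, InterpBound π L := by
  have : Finite {i : B.ι // (B.bar i).IsInfinite} := B.finite_setOf_isInfinite.to_subtype
  obtain ⟨A, hA⟩ := (Set.finite_range fun i => |(B.bar i.1).1 - (B'.bar (π i)).1|).bddAbove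
  obtain ⟨M, hM⟩ := B.exists_length_toReal_le
  obtain ⟨M', hM'⟩ := B'.exists_length_toReal_le
  exact ⟨max (max 0 A) (max M M'), le_max_of_le_left (le_max_left _ _),
    fun i => le_max_of_le_right ((hM i).trans (le_max_left _ _)),
    fun j => le_max_of_le_right ((hM' j).trans (le_max_right _ _)),
    fun i => le_max_of_le_left ((hA ⟨i, rfl⟩).trans (le_max_right _ _))⟩

variable {π} {L : ℝ} {u v : unitInterval}

lemma toSet_interpBar_subset (hL : InterpBound π L) (hδ : L * |(u : ℝ) - v| ≤ δ)
    (x : B.ι ⊕ B'.ι) : (interpBar π u x).toSet ⊆ ((interpBar π v x).thicken δ).toSet := by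
  have hδ₀ : 0 ≤ δ := (mul_nonneg hL.nonneg (abs_nonneg _)).trans hδ
  rcases x with i | j
  · by_cases h : (B.bar i).IsInfinite
    · simp only [interpBar, dif_pos h]
      apply Bar.toSet_subset_thicken_of_isInfinite
      calc _ = ((v : ℝ) - u) * ((B'.bar (π ⟨i, h⟩)).1 - (B.bar i).1) := by ring
        _ ≤ L * |(u : ℝ) - v| := by
          rw [mul_comm]
          refine (le_abs_self _).trans ?_
          rw [abs_mul, abs_sub_comm (v : ℝ), abs_sub_comm (B'.bar _).1]
          exact mul_le_mul_of_nonneg_right (hL.dist_le ⟨i, h⟩) (abs_nonneg _)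
        _ ≤ δ := hδ
    · simp only [interpBar, dif_neg h]
      refine Bar.toSet_ofLength_subset_thicken hδ₀ ?_
      have := mul_le_mul_add_mul_abs_sub (c := 1 - u) (d := 1 - v)
        (Bar.length_toReal_nonneg (B.valid i)) (hL.length_le i)
      rw [sub_sub_sub_cancel_left, abs_sub_comm] at this
      linarith
  · refine Bar.toSet_ofLength_subset_thicken hδ₀ ?_
    have := mul_le_mul_add_mul_abs_sub (c := u) (d := v)
      (Bar.length_toReal_nonneg (B'.valid j)) (hL.length_le' j)
    linarith

lemma length_interpBar_le_of_not_interpKeep (hL : InterpBound π L)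
    (hδ : L * |(u : ℝ) - v| ≤ δ) {x : B.ι ⊕ B'.ι} (hu : InterpKeep B B' u x)
    (hv : ¬InterpKeep B B' v x) :
    (interpBar π u x).length ≤ ((2 * δ : ℝ) : EReal) := by
  have hδ₀ : 0 ≤ δ := (mul_nonneg hL.nonneg (abs_nonneg _)).trans hδ
  rcases x with i | j
  · obtain ⟨h, hv⟩ := not_or.1 hv
    simp only [interpBar, dif_neg h, Bar.length_ofLength, EReal.coe_le_coe_iff]
    have := mul_le_mul_add_mul_abs_sub (c := 1 - u) (d := 1 - v)
      (Bar.length_toReal_nonneg (B.valid i)) (hL.length_le i)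
    rw [sub_sub_sub_cancel_left, abs_sub_comm] at this
    nlinarith [Bar.length_toReal_nonneg (B.valid i)]
  · have hv : (v : ℝ) ≤ 0 := not_lt.1 fun hv' => hv ⟨hu.1, hv'⟩
    simp only [interpBar, Bar.length_ofLength, EReal.coe_le_coe_iff]
    have := mul_le_mul_add_mul_abs_sub (c := u) (d := v)
      (Bar.length_toReal_nonneg (B'.valid j)) (hL.length_le' j)
    nlinarith [Bar.length_toReal_nonneg (B'.valid j)]

lemma interp_matching (hL : InterpBound π L) (hδ : L * |(u : ℝ) - v| ≤ δ) :
    Nonempty (Matching δ (interp π u) (interp π v)) := by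
  have hδ' : L * |(v : ℝ) - u| ≤ δ := by rwa [abs_sub_comm]
  exact ⟨{
    del := {x | ¬InterpKeep B B' v x.1}
    del' := {y | ¬InterpKeep B B' u y.1}
    del_short := fun x hx => length_interpBar_le_of_not_interpKeep hL hδ x.2 hx
    del'_short := fun y hy => length_interpBar_le_of_not_interpKeep hL hδ' y.2 hy
    φ := {
      toFun := fun x => ⟨⟨x.1.1, not_not.1 x.2⟩, not_not_intro x.1.2⟩
      invFun := fun y => ⟨⟨y.1.1, not_not.1 y.2⟩, not_not_intro y.1.2⟩
      left_inv := fun _ => rfl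
      right_inv := fun _ => rfl }
    subset := fun x => toSet_interpBar_subset hL hδ x.1.1
    subset' := fun x => toSet_interpBar_subset hL hδ' x.1.1 }⟩

variable (π)

lemma equiv_interp_zero : B.Equiv (interp π 0) := by
  refine ⟨_root_.Equiv.ofBijective (fun i => ⟨.inl i, Or.inr zero_lt_one⟩)
    ⟨fun i j h => Sum.inl_injective (congrArg Subtype.val h), ?_⟩, fun i => ?_⟩
  · rintro ⟨_ | j, h⟩
    · exact ⟨_, rfl⟩
    · exact absurd h.2 (lt_irrefl 0)
  · show interpBar π 0 (.inl i) = B.bar i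
    by_cases h : (B.bar i).IsInfinite
    · simp only [interpBar, dif_pos h, Set.Icc.coe_zero, sub_zero, one_mul, zero_mul, add_zero]
      exact Prod.ext rfl h.symm
    · simpa [interpBar, dif_neg h] using (Bar.eq_ofLength (B.valid i) h).symm

open scoped Classical in
lemma equiv_interp_one : B'.Equiv (interp π 1) := by
  refine ⟨(_root_.Equiv.sumCompl fun j => (B'.bar j).IsInfinite).symm.trans <|
    (π.symm.sumCongr (_root_.Equiv.refl _)).trans <|
    ((_root_.Equiv.subtypeEquivRight fun _ => or_iff_left (lt_irrefl 1)).symm.sumCongr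
      (_root_.Equiv.subtypeEquivRight fun _ => and_iff_left zero_lt_one).symm).trans
    (_root_.Equiv.subtypeSum (p := InterpKeep B B' 1)).symm, fun j => ?_⟩
  let p (j : B'.ι) : Prop := (B'.bar j).IsInfinite
  by_cases h : p j
  · rw [_root_.Equiv.trans_apply, _root_.Equiv.sumCompl_symm_apply_of_pos (p := p) h]
    show interpBar π 1 (.inl (π.symm ⟨j, h⟩).1) = B'.bar j
    simp only [interpBar, dif_pos (π.symm ⟨j, h⟩).2, Set.Icc.coe_one, sub_self, zero_mul,
      Subtype.coe_eta, _root_.Equiv.apply_symm_apply, one_mul, zero_add]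
    exact Prod.ext rfl h.symm
  · rw [_root_.Equiv.trans_apply, _root_.Equiv.sumCompl_symm_apply_of_neg (p := p) h]
    show interpBar π 1 (.inr j) = B'.bar j
    simpa [interpBar] using (Bar.eq_ofLength (B'.valid j) h).symm

end Interpolation

lemma exists_path_dHat_le {B B' : Barcode} (h : B.sigmaInf = B'.sigmaInf) :
    ∃ (γ : ℝ → Barcode) (L : ℝ), γ 0 = B ∧ γ 1 = B' ∧
      ∀ s t, dHat (γ s) (γ t) ≤ ENNReal.ofReal (L * |s - t|) := by
  have : Finite {i // (B.bar i).IsInfinite} := B.finite_setOf_isInfinite.to_subtype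
  have : Finite {j // (B'.bar j).IsInfinite} := B'.finite_setOf_isInfinite.to_subtype
  obtain ⟨π⟩ := Finite.card_eq.1 h
  obtain ⟨L, hL⟩ := exists_interpBound π
  -- `interp π 0` and `interp π 1` are only relabellings of `B` and `B'`.
  let γ (t : ℝ) : Barcode :=
    if t ≤ 0 then B else if 1 ≤ t then B' else interp π (Set.projIcc 0 1 zero_le_one t)
  have hγ (t : ℝ) : (γ t).Equiv (interp π (Set.projIcc 0 1 zero_le_one t)) := by
    by_cases h₀ : t ≤ 0
    · simp only [γ, if_pos h₀, Set.projIcc_of_le_left _ h₀]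
      exact equiv_interp_zero π
    by_cases h₁ : 1 ≤ t
    · simp only [γ, if_neg h₀, if_pos h₁, Set.projIcc_of_right_le _ h₁]
      exact equiv_interp_one π
    · simpa only [γ, if_neg h₀, if_neg h₁] using ⟨_root_.Equiv.refl _, fun _ => rfl⟩
  refine ⟨γ, L, by simp [γ], by simp [γ], fun s t => dHat_le_of_matching
    (mul_nonneg hL.nonneg (abs_nonneg _)) ((hγ s).matching_left ((hγ t).matching_right ?_))⟩
  exact interp_matching hL (mul_le_mul_of_nonneg_left (Set.abs_projIcc_sub_projIcc _) hL.nonneg)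

end Barcode

/-- Two barcodes lie in the same path component of the space
of barcodes modulo shift (with the bottleneck distance) if and only if they
have the same number of semi-infinite bars. -/
theorem path_component_iff_sigmaInf (B B' : Barcode) :
    (∃ γ : ℝ → Barcode, γ 0 = B ∧ γ 1 = B' ∧
      ∀ t ∈ Set.Icc (0 : ℝ) 1, ∀ ε : ℝ≥0∞, 0 < ε → ∃ η > (0 : ℝ),
        ∀ s ∈ Set.Icc (0 : ℝ) 1, |s - t| < η → Barcode.dHat (γ s) (γ t) < ε) ↔
    Barcode.sigmaInf B = Barcode.sigmaInf B' := by
  constructor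
  · rintro ⟨γ, rfl, rfl, hγ⟩
    refine eq_of_forall_exists_pos_eq_on_Icc (f := fun t => (γ t).sigmaInf) fun t ht => ?_
    obtain ⟨η, hη, hγt⟩ := hγ t ht 1 one_pos
    exact ⟨η, hη, fun s hs hst =>
      Barcode.sigmaInf_eq_of_dHat_lt_top ((hγt s hs hst).trans_le le_top)⟩
  · intro h
    obtain ⟨γ, L, hγ₀, hγ₁, hγ⟩ := Barcode.exists_path_dHat_le h
    refine ⟨γ, hγ₀, hγ₁, fun t _ ε hε => ?_⟩
    obtain ⟨η, hη, hγt⟩ := exists_pos_forall_lt_of_le_ofReal_mul_abs (fun s => hγ s t) hε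
    exact ⟨η, hη, fun s _ => hγt s⟩
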